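/- arXiv:2505.18817 — 3 statements merged into one kernel-verified Lean document; each statement's English description precedes it below -/
import Mathlib

section
/- Let n be a natural number, σ > 0 a real number, and γ the probability measure on the space of n×n real matrices Matrix (Fin n) (Fin n) ℝ given by the product measure whose coordinates are all the one-dimensional Gaussian measure with mean 0 and variance σ² (i.e. Measure.pi over rows of Measure.pi over columns of gaussianReal 0 σ²). Let D be an orthogonal n×n real matrix, i.e. D * Dᵀ = 1. Then the pushforward of γ under the map M ↦ D * M * Dᵀ equals γ. -/
/-!
A vector of i.i.d. `N(0, v)` coordinates has characteristic function `t ↦ exp (-v ‖t‖² / 2)`,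
which depends on `t` only through its Euclidean norm, so its law is invariant under every
orthogonal matrix. Flattening an `m × n` matrix into a vector indexed by `m × n` turns the
i.i.d. Gaussian matrix law into the i.i.d. Gaussian vector law, and `M ↦ A * M * Bᵀ` into
multiplication by the Kronecker product `A ⊗ₖ B`, which is orthogonal when `A` and `B` are.
-/

open Matrix MeasureTheory ProbabilityTheory

/-- The measurable space structure on matrices, inherited from the product
measurable structure on functions. -/
instance matrixMeasurableSpace {m n α : Type*} [MeasurableSpace α] :
    MeasurableSpace (Matrix m n α) :=
  inferInstanceAs (MeasurableSpace (m → n → α))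

open WithLp
open scoped NNReal Kronecker

section Vector

variable {ι : Type*} [Fintype ι]

lemma charFun_map_toLp_pi_gaussianReal (v : ℝ≥0) (t : EuclideanSpace ℝ ι) :
    charFun ((Measure.pi fun _ : ι ↦ gaussianReal 0 v).map (toLp 2)) t
      = Complex.exp (-(v * ‖t‖ ^ 2 / 2)) := by
  simp_rw [charFun_pi, charFun_gaussianReal, ← Complex.exp_sum]
  rw [← Complex.ofReal_pow, EuclideanSpace.real_norm_sq_eq]
  push_cast
  simp [Finset.mul_sum, Finset.sum_div]

lemma charFun_map_toLp_map_mulVec (μ : Measure (ι → ℝ)) (A : Matrix ι ι ℝ)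
    (t : EuclideanSpace ℝ ι) :
    charFun ((μ.map (A *ᵥ ·)).map (toLp 2)) t
      = charFun (μ.map (toLp 2)) (toLp 2 (Aᵀ *ᵥ t)) := by
  rw [Measure.map_map (by fun_prop) (by fun_prop), charFun_apply, charFun_apply,
    integral_map (by fun_prop) (by fun_prop), integral_map (by fun_prop) (by fun_prop)]
  congr 1 with x
  simp [EuclideanSpace.inner_eq_star_dotProduct, dotProduct_mulVec, vecMul_transpose,
    dotProduct_comm]

lemma norm_toLp_mulVec_of_transpose_mul [DecidableEq ι] {A : Matrix ι ι ℝ} (hA : Aᵀ * A = 1)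
    (x : ι → ℝ) : ‖toLp 2 (A *ᵥ x)‖ = ‖toLp 2 x‖ := by
  rw [← sq_eq_sq₀ (norm_nonneg _) (norm_nonneg _), ← real_inner_self_eq_norm_sq,
    ← real_inner_self_eq_norm_sq, EuclideanSpace.inner_toLp_toLp, EuclideanSpace.inner_toLp_toLp,
    star_trivial, star_trivial, dotProduct_mulVec, ← mulVec_transpose, mulVec_mulVec, hA,
    one_mulVec]

lemma measurePreserving_mulVec_pi_gaussianReal [DecidableEq ι] (v : ℝ≥0) {A : Matrix ι ι ℝ}
    (hA : A * Aᵀ = 1) :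
    MeasurePreserving (A *ᵥ ·) (Measure.pi fun _ : ι ↦ gaussianReal 0 v)
      (Measure.pi fun _ : ι ↦ gaussianReal 0 v) := by
  refine ⟨by fun_prop, (MeasurableEquiv.toLp 2 (ι → ℝ)).map_measurableEquiv_injective ?_⟩
  refine Measure.ext_of_charFun (funext fun t ↦ ?_)
  have hAt : Aᵀᵀ * Aᵀ = 1 := by rwa [transpose_transpose]
  rw [MeasurableEquiv.coe_toLp, charFun_map_toLp_map_mulVec, charFun_map_toLp_pi_gaussianReal,
    charFun_map_toLp_pi_gaussianReal, norm_toLp_mulVec_of_transpose_mul hAt, toLp_ofLp]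

end Vector

lemma measurePreserving_curry_pi {ι κ X : Type*} [Fintype ι] [Fintype κ] [MeasurableSpace X]
    (μ : ι → κ → Measure X) [∀ i j, IsProbabilityMeasure (μ i j)] :
    MeasurePreserving (MeasurableEquiv.curry ι κ X) (Measure.pi fun p : ι × κ ↦ μ p.1 p.2)
      (Measure.pi fun i ↦ Measure.pi fun j ↦ μ i j) :=
  ⟨by fun_prop, by simpa only [Measure.infinitePi_eq_pi] using Measure.infinitePi_map_curry μ⟩

lemma uncurry_mul_mul_transpose {l m n p R : Type*} [Fintype m] [Fintype n] [CommSemiring R]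
    (A : Matrix l m R) (M : Matrix m n R) (B : Matrix p n R) :
    Function.uncurry (A * M * Bᵀ) = (A ⊗ₖ B) *ᵥ Function.uncurry M := by
  have h := kronecker_mulVec_vec B Mᵀ A
  rw [show B * Mᵀ * Aᵀ = (A * M * Bᵀ)ᵀ by simp [Matrix.mul_assoc]] at h
  exact h.symm

lemma kronecker_mul_transpose_self {m n R : Type*} [Fintype m] [Fintype n] [DecidableEq m]
    [DecidableEq n] [CommSemiring R] {A : Matrix m m R} {B : Matrix n n R} (hA : A * Aᵀ = 1)
    (hB : B * Bᵀ = 1) : (A ⊗ₖ B) * (A ⊗ₖ B)ᵀ = 1 := by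
  rw [← kroneckerMap_transpose, ← mul_kronecker_mul, hA, hB, one_kronecker_one]

lemma measurePreserving_mul_mul_transpose_pi_gaussianReal {m n : Type*} [Fintype m]
    [DecidableEq m] [Fintype n] [DecidableEq n] (v : ℝ≥0) {A : Matrix m m ℝ} {B : Matrix n n ℝ}
    (hA : A * Aᵀ = 1) (hB : B * Bᵀ = 1) :
    MeasurePreserving (fun M : Matrix m n ℝ ↦ A * M * Bᵀ)
      (Measure.pi fun _ : m ↦ Measure.pi fun _ : n ↦ gaussianReal 0 v)
      (Measure.pi fun _ : m ↦ Measure.pi fun _ : n ↦ gaussianReal 0 v) := by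
  have hcurry := measurePreserving_curry_pi fun (_ : m) (_ : n) ↦ gaussianReal 0 v
  have hK := measurePreserving_mulVec_pi_gaussianReal v (kronecker_mul_transpose_self hA hB)
  have hconj : (fun M : Matrix m n ℝ ↦ A * M * Bᵀ)
      = Function.curry ∘ ((A ⊗ₖ B) *ᵥ ·) ∘ Function.uncurry := by
    funext M
    exact congrArg Function.curry (uncurry_mul_mul_transpose A M B)
  rw [hconj]
  exact hcurry.comp (hK.comp hcurry.symm)

theorem gaussian_matrix_measure_orthogonal_conj_invariant_general
    (n : ℕ) (σ : ℝ)
    (γ : Measure (Matrix (Fin n) (Fin n) ℝ))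
    (hγ : γ = Measure.pi fun _ : Fin n =>
      Measure.pi fun _ : Fin n => gaussianReal 0 ⟨σ ^ 2, sq_nonneg σ⟩)
    (D : Matrix (Fin n) (Fin n) ℝ) (hD : D * Dᵀ = 1) :
    Measure.map (fun M : Matrix (Fin n) (Fin n) ℝ => D * M * Dᵀ) γ = γ := by
  subst hγ
  exact (measurePreserving_mul_mul_transpose_pi_gaussianReal _ hD hD).map_eq

/-- The i.i.d. centered Gaussian matrix measure (entries `gaussianReal 0 σ²`) is
invariant under conjugation `M ↦ D * M * Dᵀ` by an orthogonal matrix `D`. -/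
theorem gaussian_matrix_measure_orthogonal_conj_invariant
    (n : ℕ) (σ : ℝ) (hσ : 0 < σ)
    (γ : Measure (Matrix (Fin n) (Fin n) ℝ))
    (hγ : γ = Measure.pi fun _ : Fin n =>
      Measure.pi fun _ : Fin n => gaussianReal 0 ⟨σ ^ 2, sq_nonneg σ⟩)
    (D : Matrix (Fin n) (Fin n) ℝ) (hD : D * Dᵀ = 1) :
    Measure.map (fun M : Matrix (Fin n) (Fin n) ℝ => D * M * Dᵀ) γ = γ :=
  gaussian_matrix_measure_orthogonal_conj_invariant_general n σ γ hγ D hD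
end

section
/- Let G be a group (it suffices that G is a type), let ι, ι₁, ι₂ be finite index types, and let D : G → Matrix ι ι ℝ, D₁ : G → Matrix ι₁ ι₁ ℝ, D₂ : G → Matrix ι₂ ι₂ ℝ be matrix-valued functions. Let c : ι₁ → ι₂ → ι → ℝ be a family of coefficients satisfying the basis-change identity: for every g ∈ G and all m₁ ∈ ι₁, m₂ ∈ ι₂, m' ∈ ι, ∑_{m ∈ ι} c m₁ m₂ m * D g m m' = ∑_{m₁' ∈ ι₁} ∑_{m₂' ∈ ι₂} D₁ g m₁ m₁' * D₂ g m₂ m₂' * c m₁' m₂' m'. Define the tensor expansion T : (ι → ℝ) → Matrix ι₁ ι₂ ℝ by (T w) m₁ m₂ = ∑_{m ∈ ι} c m₁ m₂ m * w m. Then T is equivariant: for every g ∈ G and every w : ι → ℝ, T (D g *ᵥ w) = D₁ g * (T w) * (D₂ g)ᵀ, where *ᵥ denotes matrix-vector multiplication. -/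
open Matrix

/-- Equivariance of the tensor expansion: if the coefficients `c` satisfy the
Clebsch–Gordan basis-change identity with respect to the matrix families
`D`, `D₁`, `D₂`, then the tensor expansion
`(T w) m₁ m₂ = ∑ m, c m₁ m₂ m * w m` satisfies
`T (D g *ᵥ w) = D₁ g * T w * (D₂ g)ᵀ`. -/
theorem tensor_expansion_equivariant
    {G ι ι₁ ι₂ : Type*} [Fintype ι] [Fintype ι₁] [Fintype ι₂]
    (D : G → Matrix ι ι ℝ) (D₁ : G → Matrix ι₁ ι₁ ℝ) (D₂ : G → Matrix ι₂ ι₂ ℝ)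
    (c : ι₁ → ι₂ → ι → ℝ)
    (hc : ∀ (g : G) (m₁ : ι₁) (m₂ : ι₂) (m' : ι),
      ∑ m : ι, c m₁ m₂ m * D g m m' =
        ∑ m₁' : ι₁, ∑ m₂' : ι₂, D₁ g m₁ m₁' * D₂ g m₂ m₂' * c m₁' m₂' m')
    (g : G) (w : ι → ℝ) :
    (Matrix.of fun m₁ m₂ => ∑ m : ι, c m₁ m₂ m * (D g *ᵥ w) m) =
      D₁ g * (Matrix.of fun m₁ m₂ => ∑ m : ι, c m₁ m₂ m * w m) * (D₂ g)ᵀ := by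
  ext m₁ m₂
  simp only [Matrix.mul_apply, Matrix.of_apply, Matrix.mulVec, Matrix.transpose_apply,
    dotProduct]
  calc ∑ m, c m₁ m₂ m * ∑ m', D g m m' * w m'
      = ∑ m', (∑ m, c m₁ m₂ m * D g m m') * w m' := by
        simp_rw [Finset.mul_sum, Finset.sum_mul, mul_assoc]
        exact Finset.sum_comm
    _ = ∑ m', (∑ m₁', ∑ m₂', D₁ g m₁ m₁' * D₂ g m₂ m₂' * c m₁' m₂' m') * w m' := by
        simp_rw [hc]
    _ = _ := by
        simp only [Finset.sum_mul, Finset.mul_sum]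
        rw [Finset.sum_comm]
        conv_rhs => rw [Finset.sum_comm]
        refine Finset.sum_congr rfl fun y _ => ?_
        rw [Finset.sum_comm]
        refine Finset.sum_congr rfl fun x _ => ?_
        refine Finset.sum_congr rfl fun i _ => ?_
        ring
end

section
/- Let (α, μ) be a measure space with μ σ-finite, let N ≥ 1 be a natural number, and let ψ : Fin N → α → ℂ be measurable functions that are orthonormal in L²(μ): for all i, j, ∫ conj(ψ i x) * ψ j x ∂μ = if i = j then 1 else 0 (and each ψ i is in L²(μ)). Fix r ∈ α and consider the N×N matrix M(r, y) whose column 0 has entries ψ i r and whose column (j+1) has entries ψ i (y j), for y : Fin (N-1) → α (i.e. M(r,y) i k = ψ i (Fin.cons r y k) with the first coordinate fixed to r). Then ∫ ‖det (M(r, y))‖² ∂(Measure.pi fun _ : Fin (N-1) => μ) = (N-1)! * ∑_{i} ‖ψ i r‖². Equivalently, the one-particle density of the Slater determinant Ψ(r₁,…,r_N) = (N!)^{-1/2} det[ψ_i(r_j)] satisfies ρ(r) = N ∫ ‖Ψ(r, y₁, …, y_{N-1})‖² dμ^{⊗(N-1)} = ∑_{i=1}^{N} ‖ψ_i(r)‖².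 -/
/-!
Expand `conj (det M) * det M` by the Leibniz formula into a double sum over pairs of
permutations `(σ, τ)`. By Fubini, the integral over the last `N - 1` variables of each term
factors into the inner products `⟪ψ (σ j), ψ (τ j)⟫` for `j ≠ 0`; by orthonormality their product
vanishes unless `σ` and `τ` agree away from `0`, which forces `σ = τ`. What survives is
`∑ σ, ‖ψ (σ 0) r‖ ^ 2`, and each index `i` equals `σ 0` for exactly `(N - 1)!` permutations.
-/

open MeasureTheory ComplexConjugate Equiv

theorem Equiv.Perm.comp_succ_injective {n : ℕ} :
    Function.Injective fun σ : Perm (Fin (n + 1)) => ⇑σ ∘ Fin.succ := by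
  intro σ τ h
  have h_succ (j : Fin n) : σ j.succ = τ j.succ := congrFun h j
  have h_zero : σ 0 = τ 0 := by
    rcases Fin.eq_zero_or_eq_succ (τ.symm (σ 0)) with h0 | ⟨j, hj⟩
    · exact τ.symm_apply_eq.mp h0
    · have : σ 0 = σ j.succ := by rw [h_succ, ← hj, τ.apply_symm_apply]
      exact absurd (σ.injective this).symm (Fin.succ_ne_zero j)
  ext k
  cases k using Fin.cases with
  | zero => rw [h_zero]
  | succ j => rw [h_succ]

theorem Equiv.Perm.sum_apply_zero {M : Type*} [AddCommMonoid M] {n : ℕ} (f : Fin (n + 1) → M) :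
    ∑ σ : Perm (Fin (n + 1)), f (σ 0) = n.factorial • ∑ i, f i := by
  rw [← decomposeFin.symm.sum_comp, Fintype.sum_prod_type]
  simp only [Perm.decomposeFin_symm_apply_zero, Finset.sum_const, Finset.card_univ,
    Fintype.card_perm, Fintype.card_fin, Finset.smul_sum]

theorem Matrix.conj_det_mul_det {n R : Type*} [Fintype n] [DecidableEq n] [CommRing R]
    [StarRing R] (A : Matrix n n R) :
    conj A.det * A.det = ∑ σ : Perm n, ∑ τ : Perm n,
      (((Perm.sign σ * Perm.sign τ : ℤˣ) : ℤ) : R) * ∏ k, conj (A (σ k) k) * A (τ k) k := by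
  simp only [Matrix.det_apply', map_sum, map_mul, map_intCast, map_prod, Finset.sum_mul_sum,
    Finset.prod_mul_distrib, Units.val_mul, Int.cast_mul]
  refine Finset.sum_congr rfl fun σ _ => Finset.sum_congr rfl fun τ _ => ?_
  ring

theorem integral_prod_conj_mul_eq_ite {α ι κ : Type*} [MeasurableSpace α] {μ : Measure α}
    [SigmaFinite μ] [Fintype κ] [DecidableEq ι] {ψ : ι → α → ℂ}
    (horth : ∀ i j, ∫ x, conj (ψ i x) * ψ j x ∂μ = if i = j then 1 else 0) (f g : κ → ι) :
    ∫ y : κ → α, ∏ k, conj (ψ (f k) (y k)) * ψ (g k) (y k) ∂(Measure.pi fun _ => μ) =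
      if f = g then 1 else 0 := by
  rw [integral_fintype_prod_eq_prod (fun k x => conj (ψ (f k) x) * ψ (g k) x)]
  simp only [horth, Finset.prod_boole, Finset.mem_univ, true_implies, funext_iff]

def slaterMatrix {α : Type*} {n : ℕ} (ψ : Fin (n + 1) → α → ℂ) (r : α) (y : Fin n → α) :
    Matrix (Fin (n + 1)) (Fin (n + 1)) ℂ :=
  Matrix.of fun i k => ψ i ((Fin.cons r y : Fin (n + 1) → α) k)

section Slater

variable {α : Type*} [MeasurableSpace α] {μ : Measure α} [SigmaFinite μ] {n : ℕ}
  {ψ : Fin (n + 1) → α → ℂ}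

theorem integral_conj_det_mul_det_slater (hL2 : ∀ i, MemLp (ψ i) 2 μ)
    (horth : ∀ i j, ∫ x, conj (ψ i x) * ψ j x ∂μ = if i = j then 1 else 0) (r : α) :
    ∫ y : Fin n → α,
        conj (slaterMatrix ψ r y).det * (slaterMatrix ψ r y).det ∂(Measure.pi fun _ => μ) =
      ∑ σ : Perm (Fin (n + 1)), (‖ψ (σ 0) r‖ ^ 2 : ℂ) := by
  have h_int (f g : Fin n → Fin (n + 1)) : Integrable
      (fun y : Fin n → α => ∏ j, conj (ψ (f j) (y j)) * ψ (g j) (y j)) (Measure.pi fun _ => μ) :=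
    Integrable.fintype_prod fun j => (hL2 (f j)).star.integrable_mul (hL2 (g j))
  have h_orth (σ τ : Perm (Fin (n + 1))) :
      ∫ y : Fin n → α, ∏ j, conj (ψ (σ j.succ) (y j)) * ψ (τ j.succ) (y j)
        ∂(Measure.pi fun _ => μ) = if σ = τ then 1 else 0 :=
    (integral_prod_conj_mul_eq_ite horth (σ ∘ Fin.succ) (τ ∘ Fin.succ)).trans
      (if_congr Perm.comp_succ_injective.eq_iff rfl rfl)
  simp only [slaterMatrix, Matrix.conj_det_mul_det, Matrix.of_apply, Fin.prod_univ_succ,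
    Fin.cons_zero, Fin.cons_succ]
  rw [integral_finsetSum _ fun σ _ => integrable_finsetSum _ fun τ _ =>
    ((h_int _ _).const_mul _).const_mul _]
  refine Finset.sum_congr rfl fun σ _ => ?_
  rw [integral_finsetSum _ fun τ _ => ((h_int _ _).const_mul _).const_mul _]
  simp only [integral_const_mul, h_orth, mul_ite, mul_one, mul_zero, Finset.sum_ite_eq,
    Finset.mem_univ, if_true, Int.units_mul_self, Units.val_one, Int.cast_one, one_mul,
    Complex.conj_mul']

theorem integral_norm_sq_det_slater (hL2 : ∀ i, MemLp (ψ i) 2 μ)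
    (horth : ∀ i j, ∫ x, conj (ψ i x) * ψ j x ∂μ = if i = j then 1 else 0) (r : α) :
    ∫ y : Fin n → α, ‖(slaterMatrix ψ r y).det‖ ^ 2 ∂(Measure.pi fun _ => μ) =
      (n.factorial : ℝ) * ∑ i, ‖ψ i r‖ ^ 2 := by
  apply Complex.ofReal_injective
  calc _ = ∫ y : Fin n → α,
        conj (slaterMatrix ψ r y).det * (slaterMatrix ψ r y).det ∂(Measure.pi fun _ => μ) := by
        simp only [← integral_complex_ofReal, Complex.conj_mul', Complex.ofReal_pow]
    _ = ∑ σ : Perm (Fin (n + 1)), (‖ψ (σ 0) r‖ ^ 2 : ℂ) :=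
        integral_conj_det_mul_det_slater hL2 horth r
    _ = _ := by simp [Perm.sum_apply_zero fun i => (‖ψ i r‖ ^ 2 : ℂ)]

end Slater

theorem slater_determinant_one_particle_density_general
    {α : Type*} [MeasurableSpace α] (μ : Measure α) [SigmaFinite μ]
    (N : ℕ) (hN : 1 ≤ N) (ψ : Fin N → α → ℂ)
    (hL2 : ∀ i, MemLp (ψ i) 2 μ)
    (horth : ∀ i j, ∫ x, (starRingEnd ℂ) (ψ i x) * ψ j x ∂μ =
      if i = j then 1 else 0)
    (r : α) :
    ∫ y : Fin (N - 1) → α,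
        ‖(Matrix.of fun i k =>
            ψ i ((Fin.cons r y : Fin (N - 1 + 1) → α) (Fin.cast (Nat.succ_pred_eq_of_pos hN).symm k))).det‖ ^ 2
        ∂(Measure.pi fun _ : Fin (N - 1) => μ) =
      ((N - 1).factorial : ℝ) * ∑ i, ‖ψ i r‖ ^ 2 := by
  obtain ⟨n, rfl⟩ : ∃ n, N = n + 1 := ⟨N - 1, (Nat.succ_pred_eq_of_pos hN).symm⟩
  exact integral_norm_sq_det_slater hL2 horth r

/-- One-particle density of the Slater determinant: if `ψ 0, …, ψ (N-1)` are
measurable functions orthonormal in `L²(μ)` and `r` is a fixed point, then the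
`(N-1)`-fold integral of the squared modulus of the determinant of the matrix whose
column `0` has entries `ψ i r` and whose column `j+1` has entries `ψ i (y j)` equals
`(N-1)! * ∑ i, ‖ψ i r‖²`. Equivalently, the one-particle density of the normalized
Slater determinant satisfies `ρ(r) = ∑ i, ‖ψ i r‖²`. -/
theorem slater_determinant_one_particle_density
    {α : Type*} [MeasurableSpace α] (μ : Measure α) [SigmaFinite μ]
    (N : ℕ) (hN : 1 ≤ N) (ψ : Fin N → α → ℂ)
    (hmeas : ∀ i, Measurable (ψ i))
    (hL2 : ∀ i, MemLp (ψ i) 2 μ)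
    (horth : ∀ i j, ∫ x, (starRingEnd ℂ) (ψ i x) * ψ j x ∂μ =
      if i = j then 1 else 0)
    (r : α) :
    ∫ y : Fin (N - 1) → α,
        ‖(Matrix.of fun i k =>
            ψ i ((Fin.cons r y : Fin (N - 1 + 1) → α) (Fin.cast (Nat.succ_pred_eq_of_pos hN).symm k))).det‖ ^ 2
        ∂(Measure.pi fun _ : Fin (N - 1) => μ) =
      ((N - 1).factorial : ℝ) * ∑ i, ‖ψ i r‖ ^ 2 :=
  slater_determinant_one_particle_density_general μ N hN ψ hL2 horth r
end
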